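/- Let p ≤ q be positive integers, let P¹, …, P^p ∈ ℝ^{n×n} be orthogonal projection matrices, and let a ∈ ℝ^{n^q}. Then for every m ∈ {1, …, p}: ‖(P¹ ⊗ P² ⊗ ⋯ ⊗ P^p ⊗ I_{n^{q−p}})a − a‖₂ ≥ ‖(I_{n^{m−1}} ⊗ P^m ⊗ I_{n^{q−m}})a − a‖₂. -/
import Mathlib


open Matrix

/-- Squared Euclidean norm of a vector. -/
noncomputable def vecNormSq {n : Type*} [Fintype n] (v : n → ℝ) : ℝ := ∑ i, (v i) ^ 2

/-- Euclidean norm of a vector. -/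
noncomputable def vecNorm {n : Type*} [Fintype n] (v : n → ℝ) : ℝ := Real.sqrt (vecNormSq v)

/-- Reinterpret a vector in `ℝ^a` as a vector in `ℝ^b` when `a = b`. -/
def castVec {a b : ℕ} (h : a = b) (v : Fin a → ℝ) : Fin b → ℝ :=
  fun i => v (Fin.cast h.symm i)

/-- Kronecker product of matrices indexed by `Fin`, with the standard row-major index
identification of `Fin a × Fin c` with `Fin (a·c)`. -/
def finKron {a b c d : ℕ} (A : Matrix (Fin a) (Fin b) ℝ) (B : Matrix (Fin c) (Fin d) ℝ) :
    Matrix (Fin (a * c)) (Fin (b * d)) ℝ :=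
  Matrix.of fun i j => A i.divNat j.divNat * B i.modNat j.modNat

/-- The iterated Kronecker product `P 0 ⊗ P 1 ⊗ ⋯ ⊗ P (p−1)` of `p` matrices in
`ℝ^{n×n}`, as a matrix in `ℝ^{n^p × n^p}`. -/
def bigKron {n : ℕ} : ∀ p : ℕ, (Fin p → Matrix (Fin n) (Fin n) ℝ) →
    Matrix (Fin (n ^ p)) (Fin (n ^ p)) ℝ
  | 0, _ => 1
  | (p + 1), P =>
      Matrix.reindex (finCongr (pow_succ' n p).symm) (finCongr (pow_succ' n p).symm)
        (finKron (P 0) (bigKron p fun i => P i.succ))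


def castM {N M : ℕ} (h : N = M) (A : Matrix (Fin N) (Fin N) ℝ) : Matrix (Fin M) (Fin M) ℝ :=
  A.submatrix (Fin.cast h.symm) (Fin.cast h.symm)

lemma castM_self {N : ℕ} (h : N = N) (A : Matrix (Fin N) (Fin N) ℝ) : castM h A = A := by
  ext i k; simp [castM, Fin.cast]

lemma finKron_eq {a b c d : ℕ} (A : Matrix (Fin a) (Fin b) ℝ) (B : Matrix (Fin c) (Fin d) ℝ) :
    finKron A B = (Matrix.kroneckerMap (· * ·) A B).submatrix finProdFinEquiv.symm finProdFinEquiv.symm := rfl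

lemma finKron_mul {a c : ℕ} (A A' : Matrix (Fin a) (Fin a) ℝ) (B B' : Matrix (Fin c) (Fin c) ℝ) :
    finKron A B * finKron A' B' = finKron (A * A') (B * B') := by
  rw [finKron_eq, finKron_eq, finKron_eq]
  rw [Matrix.submatrix_mul_equiv]
  rw [← Matrix.mul_kronecker_mul]

lemma finKron_transpose {a c : ℕ} (A : Matrix (Fin a) (Fin a) ℝ) (B : Matrix (Fin c) (Fin c) ℝ) :
    (finKron A B)ᵀ = finKron Aᵀ Bᵀ := rfl

lemma finKron_one_one (a c : ℕ) : finKron (1 : Matrix (Fin a) (Fin a) ℝ) (1 : Matrix (Fin c) (Fin c) ℝ) = 1 := by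
  rw [finKron_eq]
  rw [show Matrix.kroneckerMap (· * ·) (1 : Matrix (Fin a) (Fin a) ℝ) (1 : Matrix (Fin c) (Fin c) ℝ) = 1 from Matrix.one_kronecker_one]
  exact Matrix.submatrix_one_equiv _

lemma castM_castM {N M K : ℕ} (h : N = M) (h' : M = K) (A : Matrix (Fin N) (Fin N) ℝ) :
    castM h' (castM h A) = castM (h.trans h') A := by
  subst h; subst h'; rw [castM_self, castM_self]

lemma castM_mul {N M : ℕ} (h : N = M) (A B : Matrix (Fin N) (Fin N) ℝ) :
    castM h A * castM h B = castM h (A * B) := by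
  subst h; rw [castM_self, castM_self, castM_self]

lemma castM_transpose {N M : ℕ} (h : N = M) (A : Matrix (Fin N) (Fin N) ℝ) :
    (castM h A)ᵀ = castM h Aᵀ := by
  subst h; rw [castM_self, castM_self]

lemma castM_one {N M : ℕ} (h : N = M) : castM h (1 : Matrix (Fin N) (Fin N) ℝ) = 1 := by
  subst h; rw [castM_self]

lemma finKron_castM_left {a a' c : ℕ} (h : a = a') (A : Matrix (Fin a) (Fin a) ℝ)
    (B : Matrix (Fin c) (Fin c) ℝ) :
    finKron (castM h A) B = castM (by rw [h]) (finKron A B) := by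
  subst h; rw [castM_self, castM_self]

lemma finKron_castM_right {a c c' : ℕ} (h : c = c') (A : Matrix (Fin a) (Fin a) ℝ)
    (B : Matrix (Fin c) (Fin c) ℝ) :
    finKron A (castM h B) = castM (by rw [h]) (finKron A B) := by
  subst h; rw [castM_self, castM_self]

lemma finKron_assoc {a c e : ℕ} (A : Matrix (Fin a) (Fin a) ℝ) (B : Matrix (Fin c) (Fin c) ℝ)
    (C : Matrix (Fin e) (Fin e) ℝ) :
    finKron (finKron A B) C = castM (mul_assoc a c e).symm (finKron A (finKron B C)) := by
  ext i k
  show A i.divNat.divNat k.divNat.divNat * B i.divNat.modNat k.divNat.modNat * C i.modNat k.modNat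
      = A (Fin.cast (mul_assoc a c e) i).divNat (Fin.cast (mul_assoc a c e) k).divNat *
        (B (Fin.cast (mul_assoc a c e) i).modNat.divNat (Fin.cast (mul_assoc a c e) k).modNat.divNat *
         C (Fin.cast (mul_assoc a c e) i).modNat.modNat (Fin.cast (mul_assoc a c e) k).modNat.modNat)
  have h1 : ∀ i : Fin (a * c * e), (Fin.cast (mul_assoc a c e) i).divNat = i.divNat.divNat := by
    intro i; apply Fin.ext
    simp only [Fin.coe_divNat, Fin.coe_cast]
    rw [Nat.div_div_eq_div_mul, mul_comm e c]
  have h2 : ∀ i : Fin (a * c * e), (Fin.cast (mul_assoc a c e) i).modNat.divNat = i.divNat.modNat := by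
    intro i; apply Fin.ext
    simp only [Fin.coe_divNat, Fin.coe_modNat, Fin.coe_cast]
    rw [mul_comm c e, Nat.mod_mul_right_div_self]
  have h3 : ∀ i : Fin (a * c * e), (Fin.cast (mul_assoc a c e) i).modNat.modNat = i.modNat := by
    intro i; apply Fin.ext
    simp only [Fin.coe_modNat, Fin.coe_cast]
    exact Nat.mod_mod_of_dvd _ ⟨c, mul_comm c e⟩
  rw [h1, h1, h2, h2, h3, h3, mul_assoc]

lemma finKron_one_left {K c : ℕ} (hK : K = 1) (B : Matrix (Fin c) (Fin c) ℝ) :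
    finKron (1 : Matrix (Fin K) (Fin K) ℝ) B = castM (show c = K * c by rw [hK, one_mul]) B := by
  subst hK
  ext i k
  show (1 : Matrix (Fin 1) (Fin 1) ℝ) i.divNat k.divNat * B i.modNat k.modNat = _
  rw [Subsingleton.elim i.divNat k.divNat, Matrix.one_apply_eq, one_mul]
  congr 1 <;> apply Fin.ext <;> simp only [Fin.coe_modNat, Fin.coe_cast] <;>
    [exact Nat.mod_eq_of_lt (by omega : (i : ℕ) < c); exact Nat.mod_eq_of_lt (by omega : (k : ℕ) < c)]

lemma bigKron_succ {n p : ℕ} (P : Fin (p + 1) → Matrix (Fin n) (Fin n) ℝ) :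
    bigKron (p + 1) P = castM (pow_succ' n p).symm (finKron (P 0) (bigKron p fun i => P i.succ)) := by
  show Matrix.reindex _ _ _ = _
  ext i k
  rfl

lemma bigKron_congr {n : ℕ} (p p' : ℕ) (hpp : p = p') (P : Fin p → Matrix (Fin n) (Fin n) ℝ)
    (P' : Fin p' → Matrix (Fin n) (Fin n) ℝ)
    (hPP : ∀ (i : ℕ) (h : i < p) (h' : i < p'), P ⟨i, h⟩ = P' ⟨i, h'⟩) :
    bigKron p P = castM (by rw [hpp]) (bigKron p' P') := by
  subst hpp
  have : P = P' := funext fun i => by rcases i with ⟨i, hi⟩; exact hPP i hi hi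
  rw [this, castM_self]

lemma bigKron_mul {n p : ℕ} (P Q : Fin p → Matrix (Fin n) (Fin n) ℝ) :
    bigKron p P * bigKron p Q = bigKron p (fun i => P i * Q i) := by
  induction p with
  | zero => show (1 : Matrix (Fin (n ^ 0)) (Fin (n ^ 0)) ℝ) * 1 = 1; rw [one_mul]
  | succ p ih =>
    rw [bigKron_succ, bigKron_succ, bigKron_succ, castM_mul, finKron_mul, ih]

lemma bigKron_transpose {n p : ℕ} (P : Fin p → Matrix (Fin n) (Fin n) ℝ) :
    (bigKron p P)ᵀ = bigKron p (fun i => (P i)ᵀ) := by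
  induction p with
  | zero => show (1 : Matrix (Fin (n ^ 0)) (Fin (n ^ 0)) ℝ)ᵀ = 1; rw [Matrix.transpose_one]
  | succ p ih =>
    rw [bigKron_succ, bigKron_succ, castM_transpose, finKron_transpose, ih]

lemma bigKron_one {n : ℕ} (p : ℕ) : bigKron p (fun _ : Fin p => (1 : Matrix (Fin n) (Fin n) ℝ)) = 1 := by
  induction p with
  | zero => rfl
  | succ p ih => rw [bigKron_succ]; rw [ih, finKron_one_one, castM_one]

lemma finKron_assoc' {a c e : ℕ} (A : Matrix (Fin a) (Fin a) ℝ) (B : Matrix (Fin c) (Fin c) ℝ)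
    (C : Matrix (Fin e) (Fin e) ℝ) :
    finKron A (finKron B C) = castM (mul_assoc a c e) (finKron (finKron A B) C) := by
  rw [finKron_assoc, castM_castM, castM_self]

lemma bigKron_delta {n : ℕ} : ∀ (j p : ℕ) (hj : j < p) (A : Matrix (Fin n) (Fin n) ℝ),
    bigKron p (fun i : Fin p => if (i : ℕ) = j then A else 1) =
      castM (show n ^ j * n * n ^ (p - j - 1) = n ^ p by
          rw [← pow_succ, ← pow_add]; congr 1; omega)
        (finKron (finKron (1 : Matrix (Fin (n ^ j)) (Fin (n ^ j)) ℝ) A)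
          (1 : Matrix (Fin (n ^ (p - j - 1))) (Fin (n ^ (p - j - 1))) ℝ)) := by
  intro j
  induction j with
  | zero =>
    intro p hj A
    obtain ⟨t, rfl⟩ : ∃ t, p = t + 1 := ⟨p - 1, by omega⟩
    rw [bigKron_succ]
    have h1 : (fun i : Fin t => if ((i.succ : Fin (t+1)) : ℕ) = 0 then A else 1) =
        (fun _ : Fin t => (1 : Matrix (Fin n) (Fin n) ℝ)) := by
      funext i; rw [if_neg (by simp)]
    rw [h1, bigKron_one, if_pos (by simp)]
    rw [finKron_one_left (pow_zero n) A, finKron_castM_left, castM_castM]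
  | succ j ih =>
    intro p hj A
    obtain ⟨t, rfl⟩ : ∃ t, p = t + 1 := ⟨p - 1, by omega⟩
    have hjt : j < t := by omega
    rw [bigKron_succ]
    have h1 : (fun i : Fin t => if ((i.succ : Fin (t+1)) : ℕ) = j + 1 then A else 1) =
        (fun i : Fin t => if (i : ℕ) = j then A else 1) := by
      funext i; simp only [Fin.val_succ, Nat.add_right_cancel_iff]
    rw [h1, ih t hjt A, if_neg (by simp), finKron_castM_right, castM_castM]
    -- LHS : castM _ (finKron 1ₙ ((1_{n^j} ⊗ A) ⊗ 1_{n^(t-j-1)}))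
    -- RHS : castM _ ((1_{n^(j+1)} ⊗ A) ⊗ 1_{n^(t+1-(j+1)-1)})
    have h2 : (1 : Matrix (Fin (n ^ (j+1))) (Fin (n ^ (j+1))) ℝ) =
        castM (pow_succ' n j).symm (finKron (1 : Matrix (Fin n) (Fin n) ℝ)
          (1 : Matrix (Fin (n ^ j)) (Fin (n ^ j)) ℝ)) := by
      rw [finKron_one_one, castM_one]
    rw [h2, finKron_castM_left, finKron_castM_left, finKron_assoc, finKron_assoc,
      castM_castM, castM_castM]
    have h3 : (1 : Matrix (Fin (n ^ (t + 1 - (j+1) - 1))) (Fin (n ^ (t + 1 - (j+1) - 1))) ℝ) =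
        castM (show n ^ (t - j - 1) = n ^ (t + 1 - (j+1) - 1) by congr 1; omega)
          (1 : Matrix (Fin (n ^ (t - j - 1))) (Fin (n ^ (t - j - 1))) ℝ) := by
      rw [castM_one]
    rw [h3]
    simp only [finKron_castM_right, castM_castM]
    rw [finKron_assoc, castM_castM]

lemma vecNormSq_dot {n : Type*} [Fintype n] (v : n → ℝ) : vecNormSq v = v ⬝ᵥ v := by
  simp [vecNormSq, dotProduct, sq]

lemma vecNormSq_nonneg {n : Type*} [Fintype n] (v : n → ℝ) : 0 ≤ vecNormSq v :=
  Finset.sum_nonneg fun i _ => sq_nonneg _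

lemma proj_key {N : ℕ} (M : Matrix (Fin N) (Fin N) ℝ) (hs : Mᵀ = M) (hi : M * M = M)
    (v : Fin N → ℝ) :
    vecNormSq (M *ᵥ v - v) = vecNormSq v - vecNormSq (M *ᵥ v) := by
  have hMv : (M *ᵥ v) ⬝ᵥ (M *ᵥ v) = (M *ᵥ v) ⬝ᵥ v := by
    rw [dotProduct_mulVec (M *ᵥ v) M v]
    congr 1
    rw [← Matrix.mulVec_transpose, hs, Matrix.mulVec_mulVec, hi]
  have hc : v ⬝ᵥ (M *ᵥ v) = (M *ᵥ v) ⬝ᵥ (M *ᵥ v) := (dotProduct_comm _ _).trans hMv.symm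
  rw [vecNormSq_dot, vecNormSq_dot, vecNormSq_dot, sub_dotProduct,
    dotProduct_sub, dotProduct_sub, hMv, hc]
  ring_nf
  rw [hMv]

lemma proj_compare {N : ℕ} (Q R : Matrix (Fin N) (Fin N) ℝ)
    (hQs : Qᵀ = Q) (hQi : Q * Q = Q) (hRs : Rᵀ = R) (hRi : R * R = R)
    (hQR : Q * R = Q) (a : Fin N → ℝ) :
    vecNorm (R *ᵥ a - a) ≤ vecNorm (Q *ᵥ a - a) := by
  apply Real.sqrt_le_sqrt
  rw [proj_key Q hQs hQi, proj_key R hRs hRi]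
  have h1 : vecNormSq (Q *ᵥ a) ≤ vecNormSq (R *ᵥ a) := by
    have h2 : Q *ᵥ a = Q *ᵥ (R *ᵥ a) := by rw [Matrix.mulVec_mulVec, hQR]
    rw [h2]
    have h3 := proj_key Q hQs hQi (R *ᵥ a)
    linarith [vecNormSq_nonneg (Q *ᵥ (R *ᵥ a) - R *ᵥ a)]
  linarith

lemma vecNorm_cast_side {K N : ℕ} (h : N = K) (M : Matrix (Fin K) (Fin K) ℝ) (a : Fin N → ℝ) :
    vecNorm (M *ᵥ castVec h a - castVec h a) = vecNorm (castM h.symm M *ᵥ a - a) := by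
  subst h
  have hc : castVec rfl a = a := funext fun i => congrArg a (Fin.ext rfl)
  rw [hc, castM_self]

/-- For orthogonal projections `P¹, …, P^p ∈ ℝ^{n×n}` and `a ∈ ℝ^{n^q}` (`1 ≤ p ≤ q`), for
every `m ∈ {1, …, p}`:
`‖(P¹ ⊗ ⋯ ⊗ P^p ⊗ I_{n^{q−p}})a − a‖₂ ≥ ‖(I_{n^{m−1}} ⊗ P^m ⊗ I_{n^{q−m}})a − a‖₂`.
Here `P j` (for `j : Fin p`) is the projection `P^{j+1}`. -/
theorem stmt17 {n p q : ℕ} (hp : 0 < p) (hpq : p ≤ q)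
    (P : Fin p → Matrix (Fin n) (Fin n) ℝ)
    (hproj : ∀ j, (P j).IsSymm ∧ P j * P j = P j)
    (a : Fin (n ^ q) → ℝ) :
    ∀ j : Fin p,
      vecNorm
          ((finKron
              (finKron (1 : Matrix (Fin (n ^ (j : ℕ))) (Fin (n ^ (j : ℕ))) ℝ) (P j))
              (1 : Matrix (Fin (n ^ (q - (j : ℕ) - 1))) (Fin (n ^ (q - (j : ℕ) - 1))) ℝ)).mulVec
              (castVec (show n ^ q = n ^ (j : ℕ) * n * n ^ (q - (j : ℕ) - 1) by
                rw [← pow_succ, ← pow_add]; congr 1; omega) a)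
            - castVec (show n ^ q = n ^ (j : ℕ) * n * n ^ (q - (j : ℕ) - 1) by
                rw [← pow_succ, ← pow_add]; congr 1; omega) a) ≤
        vecNorm
          ((finKron (bigKron p P)
              (1 : Matrix (Fin (n ^ (q - p))) (Fin (n ^ (q - p))) ℝ)).mulVec
              (castVec (show n ^ q = n ^ p * n ^ (q - p) by
                rw [← pow_add]; congr 1; omega) a)
            - castVec (show n ^ q = n ^ p * n ^ (q - p) by
                rw [← pow_add]; congr 1; omega) a) := by
  intro j
  have hR : n ^ q = n ^ (j : ℕ) * n * n ^ (q - (j : ℕ) - 1) := by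
    rw [← pow_succ, ← pow_add]; congr 1; omega
  have hQ : n ^ q = n ^ p * n ^ (q - p) := by
    rw [← pow_add]; congr 1; omega
  rw [vecNorm_cast_side hR, vecNorm_cast_side hQ]
  have hjlt : (j : ℕ) < p := j.isLt
  -- identify R with the delta bigKron
  have hRd : castM hR.symm
      (finKron (finKron (1 : Matrix (Fin (n ^ (j : ℕ))) (Fin (n ^ (j : ℕ))) ℝ) (P j))
        (1 : Matrix (Fin (n ^ (q - (j : ℕ) - 1))) (Fin (n ^ (q - (j : ℕ) - 1))) ℝ)) =
      castM hQ.symm (finKron (bigKron p (fun i : Fin p => if (i : ℕ) = (j : ℕ) then P j else 1))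
        (1 : Matrix (Fin (n ^ (q - p))) (Fin (n ^ (q - p))) ℝ)) := by
    conv_rhs => rw [bigKron_delta (j : ℕ) p hjlt (P j), finKron_castM_left, castM_castM,
      finKron_assoc, castM_castM, finKron_one_one]
    conv_lhs => rw [show (1 : Matrix (Fin (n ^ (q - (j:ℕ) - 1))) (Fin (n ^ (q - (j:ℕ) - 1))) ℝ) =
      castM (show n ^ (p - (j:ℕ) - 1) * n ^ (q - p) = n ^ (q - (j:ℕ) - 1) by
        rw [← pow_add]; congr 1; omega)
      (1 : Matrix (Fin (n ^ (p - (j:ℕ) - 1) * n ^ (q - p)))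
        (Fin (n ^ (p - (j:ℕ) - 1) * n ^ (q - p))) ℝ) from (castM_one _).symm]
    rw [finKron_castM_right, castM_castM]
  rw [hRd]
  have hds : (fun i : Fin p => (if (i:ℕ) = (j:ℕ) then P j else (1 : Matrix (Fin n) (Fin n) ℝ))ᵀ)
      = (fun i : Fin p => if (i:ℕ) = (j:ℕ) then P j else 1) := funext fun i => by
    by_cases hij : (i:ℕ) = (j:ℕ)
    · rw [if_pos hij]; exact (hproj j).1
    · rw [if_neg hij]; exact Matrix.transpose_one
  have hdi : (fun i : Fin p => (if (i:ℕ) = (j:ℕ) then P j else (1 : Matrix (Fin n) (Fin n) ℝ)) *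
      (if (i:ℕ) = (j:ℕ) then P j else 1))
      = (fun i : Fin p => if (i:ℕ) = (j:ℕ) then P j else 1) := funext fun i => by
    by_cases hij : (i:ℕ) = (j:ℕ)
    · rw [if_pos hij]; exact (hproj j).2
    · rw [if_neg hij]; exact one_mul _
  have hdm : (fun i : Fin p => P i * (if (i:ℕ) = (j:ℕ) then P j else (1 : Matrix (Fin n) (Fin n) ℝ)))
      = P := funext fun i => by
    by_cases hij : (i:ℕ) = (j:ℕ)
    · have hij' : i = j := Fin.ext hij
      subst hij'
      rw [if_pos rfl]; exact (hproj i).2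
    · rw [if_neg hij]; exact mul_one _
  apply proj_compare
  · rw [castM_transpose, finKron_transpose, Matrix.transpose_one, bigKron_transpose,
      show (fun i : Fin p => (P i)ᵀ) = P from funext fun i => (hproj i).1]
  · rw [castM_mul, finKron_mul, bigKron_mul, one_mul,
      show (fun i : Fin p => P i * P i) = P from funext fun i => (hproj i).2]
  · rw [castM_transpose, finKron_transpose, Matrix.transpose_one, bigKron_transpose, hds]
  · rw [castM_mul, finKron_mul, bigKron_mul, one_mul, hdi]
  · rw [castM_mul, finKron_mul, bigKron_mul, mul_one, hdm]
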